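/- arXiv:2203.14384 — 5 statements merged into one kernel-verified Lean document; each statement's English description precedes it below -/
import Mathlib

section
/- Let λ be a real number with λ ∉ σ(−γA). If λ is an eigenvalue of H, then det(M^λ) = 0; moreover, for every nonzero vector v with Hv = λv, the vector (v_w)_{w∈W} ∈ ℝ^W is a nonzero element of the kernel of M^λ. -/
/-!
Over the spectral decomposition, `λ + γA = ∑ (λ + γφ_ℓ) P_ℓ`, and `λ ∉ σ(-γA)` makes every
coefficient nonzero, so `R = ∑ (λ + γφ_ℓ)⁻¹ P_ℓ` inverts `λ + γA`. With
`S = ∑_{w ∈ W} e_w e_wᵀ`, the equation `Hv = λv` reads `(λ + γA) v = -S v`, hence `v = -R S v`.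
Thus `v` is determined by its values on `W` (so `v|_W ≠ 0`), and reading this identity on `W`
gives `(1 + R_{WW}) v|_W = 0`, which is `M^λ v|_W = 0` since `M^λ = 1 + R_{WW}`.
-/

open Matrix

variable {V : Type*} [Fintype V] [DecidableEq V]

/-- The search Hamiltonian `H = -γ•A - ∑_{w ∈ W} e_w e_wᵀ`. -/
noncomputable def searchH (A : Matrix V V ℝ) (W : Finset V) (γ : ℝ) : Matrix V V ℝ :=
  (-γ) • A - ∑ w ∈ W, Matrix.vecMulVec (Pi.single w 1) (Pi.single w 1)

/-- `μ` is a (real) eigenvalue of the matrix `M`. -/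
def IsEig (M : Matrix V V ℝ) (μ : ℝ) : Prop :=
  ∃ x, x ≠ 0 ∧ M.mulVec x = μ • x

/-- `φ, P` form the spectral decomposition of the symmetric matrix `A`:
`φ 0 > φ 1 > ⋯ > φ k` are the distinct eigenvalues of `A`, and `P ℓ` is the
orthogonal projection onto the `φ ℓ`-eigenspace. -/
def SpectralDecomp (A : Matrix V V ℝ) (k : ℕ) (φ : Fin (k+1) → ℝ)
    (P : Fin (k+1) → Matrix V V ℝ) : Prop :=
  StrictAnti φ ∧ (∀ ℓ, (P ℓ)ᵀ = P ℓ) ∧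
    (∀ ℓ ℓ', P ℓ * P ℓ' = if ℓ = ℓ' then P ℓ else 0) ∧
    (∑ ℓ, P ℓ = 1) ∧ (A = ∑ ℓ, φ ℓ • P ℓ) ∧ (∀ ℓ, P ℓ ≠ 0)

/-- The matrix `M^λ`, indexed by the marked vertices, with entries
`M^λ_{w w'} = δ_{w w'} + ∑_ℓ (e_wᵀ P_ℓ e_{w'})/(λ + γ φ_ℓ)`. -/
noncomputable def Mmat {k : ℕ} (φ : Fin (k+1) → ℝ) (P : Fin (k+1) → Matrix V V ℝ)
    (W : Finset V) (γ lam : ℝ) : Matrix W W ℝ :=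
  Matrix.of fun w w' : W =>
    (if (w : V) = (w' : V) then (1 : ℝ) else 0) +
      ∑ ℓ, P ℓ (w : V) (w' : V) / (lam + γ * φ ℓ)

section OrthogonalIdempotents

variable {n ι K : Type*} [Fintype n] [Fintype ι] [DecidableEq ι] [Field K]
  {P : ι → Matrix n n K} (horth : ∀ ℓ ℓ', P ℓ * P ℓ' = if ℓ = ℓ' then P ℓ else 0)
include horth

theorem sum_smul_mul_of_orthogonal (a : ι → K) (ℓ : ι) :
    (∑ m, a m • P m) * P ℓ = a ℓ • P ℓ := by
  simp [Finset.sum_mul, horth]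

theorem sum_smul_mul_sum_smul_of_orthogonal (a b : ι → K) :
    (∑ ℓ, a ℓ • P ℓ) * (∑ ℓ, b ℓ • P ℓ) = ∑ ℓ, (a ℓ * b ℓ) • P ℓ := by
  simp only [Finset.mul_sum, mul_smul_comm, sum_smul_mul_of_orthogonal horth, smul_smul, mul_comm]

theorem sum_inv_smul_mul_sum_smul_of_orthogonal [DecidableEq n] (hsum : ∑ ℓ, P ℓ = 1)
    {c : ι → K} (hc : ∀ ℓ, c ℓ ≠ 0) :
    (∑ ℓ, (c ℓ)⁻¹ • P ℓ) * (∑ ℓ, c ℓ • P ℓ) = 1 := by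
  simp [sum_smul_mul_sum_smul_of_orthogonal horth, inv_mul_cancel₀ (hc _), hsum]

end OrthogonalIdempotents

theorem smul_one_add_smul_eq_sum_smul {n ι K : Type*} [DecidableEq n] [Fintype ι] [Field K]
    {P : ι → Matrix n n K} (hsum : ∑ ℓ, P ℓ = 1) {A : Matrix n n K} {φ : ι → K}
    (hA : A = ∑ ℓ, φ ℓ • P ℓ) (γ lam : K) :
    lam • (1 : Matrix n n K) + γ • A = ∑ ℓ, (lam + γ * φ ℓ) • P ℓ := by
  rw [hA, ← hsum, Finset.smul_sum, Finset.smul_sum, ← Finset.sum_add_distrib]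
  simp only [smul_smul, add_smul]

theorem isEig_of_mul_eq_smul {M Q : Matrix V V ℝ} {μ : ℝ} (hMQ : M * Q = μ • Q) (hQ : Q ≠ 0) :
    IsEig M μ := by
  obtain ⟨i, j, hij⟩ : ∃ i j, Q i j ≠ 0 := by
    by_contra! h
    exact hQ (Matrix.ext h)
  refine ⟨Q *ᵥ Pi.single j 1, fun h => hij (by simpa using congrFun h i), ?_⟩
  rw [mulVec_mulVec, hMQ, smul_mulVec]

theorem add_mul_ne_zero_of_not_isEig {ι : Type*} [Fintype ι] [DecidableEq ι]
    {A : Matrix V V ℝ} {φ : ι → ℝ} {P : ι → Matrix V V ℝ}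
    (horth : ∀ ℓ ℓ', P ℓ * P ℓ' = if ℓ = ℓ' then P ℓ else 0) (hA : A = ∑ ℓ, φ ℓ • P ℓ)
    (hP : ∀ ℓ, P ℓ ≠ 0) {γ lam : ℝ} (hnot : ¬ IsEig ((-γ) • A) lam) (ℓ : ι) :
    lam + γ * φ ℓ ≠ 0 := by
  intro h
  refine hnot (isEig_of_mul_eq_smul (Q := P ℓ) ?_ (hP ℓ))
  rw [smul_mul_assoc, hA, sum_smul_mul_of_orthogonal horth, smul_smul,
    show -γ * φ ℓ = lam by linarith]

theorem sum_vecMulVec_single_mulVec {n R : Type*} [Fintype n] [DecidableEq n] [CommSemiring R]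
    (W : Finset n) (v : n → R) :
    (∑ w ∈ W, vecMulVec (Pi.single w 1) (Pi.single w 1)) *ᵥ v =
      fun i => if i ∈ W then v i else 0 := by
  ext i
  simp [sum_mulVec, vecMulVec_mulVec, Pi.single_apply]

section SearchEigenvector

variable {A R : Matrix V V ℝ} {W : Finset V} {γ lam : ℝ} {v : V → ℝ}

theorem add_sum_mul_eq_zero_of_searchH_mulVec (hR : R * (lam • 1 + γ • A) = 1)
    (hv : searchH A W γ *ᵥ v = lam • v) (i : V) :
    v i + ∑ w ∈ W, R i w * v w = 0 := by
  have hres : (lam • 1 + γ • A) *ᵥ v = -fun j => if j ∈ W then v j else 0 := by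
    rw [searchH, sub_mulVec, sum_vecMulVec_single_mulVec] at hv
    rw [add_mulVec, smul_mulVec, one_mulVec, smul_mulVec, ← hv, smul_mulVec]
    module
  have hvi := congrFun (congrArg (R *ᵥ ·) hres) i
  simp only [mulVec_mulVec, hR, one_mulVec, mulVec_neg] at hvi
  simp [hvi, mulVec, dotProduct, mul_ite, Finset.sum_ite_mem]

theorem restrict_ne_zero_of_searchH_mulVec (hR : R * (lam • 1 + γ • A) = 1)
    (hv : searchH A W γ *ᵥ v = lam • v) (hv0 : v ≠ 0) :
    (fun w : W => v w) ≠ 0 := by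
  intro hW
  refine hv0 (funext fun i => ?_)
  have hzero : ∀ w ∈ W, v w = 0 := fun w hw => congrFun hW ⟨w, hw⟩
  have hsum : ∑ w ∈ W, R i w * v w = 0 :=
    Finset.sum_eq_zero fun w hw => by rw [hzero w hw, mul_zero]
  simpa [hsum] using add_sum_mul_eq_zero_of_searchH_mulVec hR hv i

theorem one_add_submatrix_mulVec_restrict_eq_zero (hR : R * (lam • 1 + γ • A) = 1)
    (hv : searchH A W γ *ᵥ v = lam • v) :
    (1 + R.submatrix ((↑) : W → V) (↑)) *ᵥ (fun w : W => v w) = 0 := by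
  ext w
  have h := add_sum_mul_eq_zero_of_searchH_mulVec hR hv w
  rw [← Finset.sum_coe_sort W] at h
  rw [add_mulVec, one_mulVec]
  simpa only [Pi.add_apply, mulVec, dotProduct, submatrix_apply, Pi.zero_apply] using h

end SearchEigenvector

theorem Mmat_eq_one_add_submatrix {n : Type*} [DecidableEq n] {k : ℕ} (φ : Fin (k+1) → ℝ)
    (P : Fin (k+1) → Matrix n n ℝ) (W : Finset n) (γ lam : ℝ) :
    Mmat φ P W γ lam = 1 + (∑ ℓ, (lam + γ * φ ℓ)⁻¹ • P ℓ).submatrix ((↑) : W → n) (↑) := by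
  ext w w'
  simp [Mmat, one_apply, Matrix.sum_apply, div_eq_inv_mul]

theorem stmt1_general (G : SimpleGraph V) [DecidableRel G.Adj]
    (W : Finset V) (γ : ℝ)
    (k : ℕ) (φ : Fin (k+1) → ℝ) (P : Fin (k+1) → Matrix V V ℝ)
    (hspec : SpectralDecomp (G.adjMatrix ℝ) k φ P)
    (lam : ℝ) (hnot : ¬ IsEig ((-γ) • G.adjMatrix ℝ) lam)
    (hlam : IsEig (searchH (G.adjMatrix ℝ) W γ) lam) :
    (Mmat φ P W γ lam).det = 0 ∧
      ∀ v : V → ℝ, v ≠ 0 → (searchH (G.adjMatrix ℝ) W γ).mulVec v = lam • v →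
        (fun w : W => v (w : V)) ≠ 0 ∧
          (Mmat φ P W γ lam).mulVec (fun w : W => v (w : V)) = 0 := by
  obtain ⟨-, -, horth, hsum, hA, hP⟩ := hspec
  have hR : (∑ ℓ, (lam + γ * φ ℓ)⁻¹ • P ℓ) * (lam • 1 + γ • G.adjMatrix ℝ) = 1 := by
    rw [smul_one_add_smul_eq_sum_smul hsum hA]
    exact sum_inv_smul_mul_sum_smul_of_orthogonal horth hsum
      (add_mul_ne_zero_of_not_isEig horth hA hP hnot)
  have hker : ∀ v : V → ℝ, v ≠ 0 → searchH (G.adjMatrix ℝ) W γ *ᵥ v = lam • v →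
      (fun w : W => v w) ≠ 0 ∧ Mmat φ P W γ lam *ᵥ (fun w : W => v w) = 0 :=
    fun v hv0 hv => ⟨restrict_ne_zero_of_searchH_mulVec hR hv hv0,
      Mmat_eq_one_add_submatrix φ P W γ lam ▸ one_add_submatrix_mulVec_restrict_eq_zero hR hv⟩
  obtain ⟨x, hx0, hx⟩ := hlam
  exact ⟨exists_mulVec_eq_zero_iff.mp ⟨_, hker x hx0 hx⟩, hker⟩

theorem stmt1 (G : SimpleGraph V) [DecidableRel G.Adj] (hG : G.Connected)
    (W : Finset V) (hW : W.Nonempty) (γ : ℝ) (hγ : 0 < γ)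
    (k : ℕ) (φ : Fin (k+1) → ℝ) (P : Fin (k+1) → Matrix V V ℝ)
    (hspec : SpectralDecomp (G.adjMatrix ℝ) k φ P)
    (lam : ℝ) (hnot : ¬ IsEig ((-γ) • G.adjMatrix ℝ) lam)
    (hlam : IsEig (searchH (G.adjMatrix ℝ) W γ) lam) :
    (Mmat φ P W γ lam).det = 0 ∧
      ∀ v : V → ℝ, v ≠ 0 → (searchH (G.adjMatrix ℝ) W γ).mulVec v = lam • v →
        (fun w : W => v (w : V)) ≠ 0 ∧
          (Mmat φ P W γ lam).mulVec (fun w : W => v (w : V)) = 0 :=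
  stmt1_general G W γ k φ P hspec lam hnot hlam
end

section
/- Let λ be a real number with λ ∉ σ(−γA), and let u ∈ ℝ^W be a nonzero vector with M^λ u = 0. Then the vector v = −Σ_{ℓ=0}^k (1/(λ + γφ_ℓ)) Σ_{w∈W} u_w · (P_ℓ e_w) is nonzero and satisfies Hv = λv; in particular, λ is an eigenvalue of H. -/
open Matrix

variable {V : Type*} [Fintype V] [DecidableEq V]

theorem stmt2 (G : SimpleGraph V) [DecidableRel G.Adj] (hG : G.Connected)
    (W : Finset V) (hW : W.Nonempty) (γ : ℝ) (hγ : 0 < γ)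
    (k : ℕ) (φ : Fin (k+1) → ℝ) (P : Fin (k+1) → Matrix V V ℝ)
    (hspec : SpectralDecomp (G.adjMatrix ℝ) k φ P)
    (lam : ℝ) (hnot : ¬ IsEig ((-γ) • G.adjMatrix ℝ) lam)
    (u : W → ℝ) (hu : u ≠ 0) (hMu : (Mmat φ P W γ lam).mulVec u = 0) :
    (fun i : V => -∑ ℓ, (1 / (lam + γ * φ ℓ)) * ∑ w : W, u w * P ℓ i (w : V)) ≠ 0 ∧
      (searchH (G.adjMatrix ℝ) W γ).mulVec
          (fun i : V => -∑ ℓ, (1 / (lam + γ * φ ℓ)) * ∑ w : W, u w * P ℓ i (w : V))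
        = lam • (fun i : V => -∑ ℓ, (1 / (lam + γ * φ ℓ)) * ∑ w : W, u w * P ℓ i (w : V)) ∧
      IsEig (searchH (G.adjMatrix ℝ) W γ) lam := by
  obtain ⟨-, hsym, horth, hsum, hA, hPne⟩ := hspec
  -- A * P ℓ = φ ℓ • P ℓ
  have hAP : ∀ ℓ, (G.adjMatrix ℝ) * P ℓ = φ ℓ • P ℓ := by
    intro ℓ
    rw [hA, Finset.sum_mul,
      Finset.sum_congr rfl fun ℓ' _ => by rw [smul_mul_assoc, horth ℓ' ℓ]]
    simp
  -- scalar form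
  have hAPs : ∀ ℓ i j, ∑ m, G.adjMatrix ℝ i m * P ℓ m j = φ ℓ * P ℓ i j := by
    intro ℓ i j
    have h2 := congrFun (congrFun (hAP ℓ) i) j
    simpa [Matrix.mul_apply] using h2
  -- denominators are nonzero
  have hden : ∀ ℓ, lam + γ * φ ℓ ≠ 0 := by
    intro ℓ hℓ
    apply hnot
    have hex : ∃ i j, P ℓ i j ≠ 0 := by
      by_contra h
      push_neg at h
      exact hPne ℓ (by ext i j; exact h i j)
    obtain ⟨i0, j0, hij⟩ := hex
    refine ⟨fun i => P ℓ i j0, fun h0 => hij (congrFun h0 i0), ?_⟩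
    funext i
    have hlam : lam = -(γ * φ ℓ) := by linarith
    simp only [Matrix.mulVec, dotProduct, Matrix.smul_apply, Pi.smul_apply, smul_eq_mul, hlam]
    calc ∑ x : V, -γ * G.adjMatrix ℝ i x * P ℓ x j0
        = -γ * ∑ x : V, G.adjMatrix ℝ i x * P ℓ x j0 := by
          rw [Finset.mul_sum]; exact Finset.sum_congr rfl fun x _ => by ring
      _ = -(γ * φ ℓ) * P ℓ i j0 := by rw [hAPs]; ring
  set s : Fin (k+1) → V → ℝ := fun ℓ i => ∑ w : W, u w * P ℓ i (w : V) with hs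
  set vv : V → ℝ :=
    (fun i : V => -∑ ℓ, (1 / (lam + γ * φ ℓ)) * ∑ w : W, u w * P ℓ i (w : V)) with hvv
  have hvvs : ∀ i, vv i = -∑ ℓ, (1 / (lam + γ * φ ℓ)) * s ℓ i := fun i => rfl
  -- A acts on s ℓ by φ ℓ
  have hAs : ∀ ℓ i, ∑ j, G.adjMatrix ℝ i j * s ℓ j = φ ℓ * s ℓ i := by
    intro ℓ i
    simp only [hs]
    rw [Finset.sum_congr rfl fun j (_ : j ∈ Finset.univ) => Finset.mul_sum _ _ _,
      Finset.sum_comm]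
    have h1 : ∀ w : W, ∑ j, G.adjMatrix ℝ i j * (u w * P ℓ j (w : V))
        = u w * (φ ℓ * P ℓ i (w : V)) := by
      intro w
      rw [← hAPs ℓ i (w : V), Finset.mul_sum]
      exact Finset.sum_congr rfl fun j _ => by ring
    rw [Finset.sum_congr rfl fun w _ => h1 w, Finset.mul_sum]
    exact Finset.sum_congr rfl fun w _ => by ring
  -- sum of projections is the identity, entrywise
  have hone : ∀ i j : V, ∑ ℓ, P ℓ i j = if i = j then (1:ℝ) else 0 := by
    intro i j
    have h2 := congrFun (congrFun hsum i) j
    simpa [Matrix.sum_apply, Matrix.one_apply] using h2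
  -- sum of s ℓ
  have hSsum : ∀ i, ∑ ℓ, s ℓ i = ∑ w : W, u w * (if i = (w : V) then (1:ℝ) else 0) := by
    intro i
    simp only [hs]
    rw [Finset.sum_comm]
    refine Finset.sum_congr rfl fun w _ => ?_
    rw [← Finset.mul_sum, hone]
  -- vv restricted to W equals u
  have hvW : ∀ w : W, vv (w : V) = u w := by
    intro w
    have hM := congrFun hMu w
    simp only [Matrix.mulVec, dotProduct, Mmat, Matrix.of_apply, Pi.zero_apply,
      add_mul, Finset.sum_add_distrib, ite_mul, one_mul, zero_mul, Subtype.coe_inj,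
      Finset.sum_ite_eq, Finset.mem_univ, if_true] at hM
    have h2 : vv (w : V)
        = -∑ w' : W, (∑ ℓ, P ℓ (w : V) (w' : V) / (lam + γ * φ ℓ)) * u w' := by
      rw [hvvs]
      congr 1
      calc ∑ ℓ, 1 / (lam + γ * φ ℓ) * s ℓ (w : V)
          = ∑ ℓ, ∑ w' : W, (P ℓ (w : V) (w' : V) / (lam + γ * φ ℓ)) * u w' := by
            refine Finset.sum_congr rfl fun ℓ _ => ?_
            simp only [hs]
            rw [Finset.mul_sum]
            exact Finset.sum_congr rfl fun w' _ => by ring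
        _ = ∑ w' : W, (∑ ℓ, P ℓ (w : V) (w' : V) / (lam + γ * φ ℓ)) * u w' := by
            rw [Finset.sum_comm]
            exact Finset.sum_congr rfl fun w' _ => (Finset.sum_mul _ _ _).symm
    rw [h2]
    linarith [hM]
  -- the eigenvalue equation
  have heig : (searchH (G.adjMatrix ℝ) W γ).mulVec vv = lam • vv := by
    funext i
    have hAvv : ∑ j, G.adjMatrix ℝ i j * vv j
        = -∑ ℓ, 1 / (lam + γ * φ ℓ) * (φ ℓ * s ℓ i) := by
      have h1 : ∀ j, G.adjMatrix ℝ i j * vv j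
          = ∑ ℓ, -(1 / (lam + γ * φ ℓ) * (G.adjMatrix ℝ i j * s ℓ j)) := by
        intro j
        rw [hvvs, mul_neg, Finset.mul_sum, ← Finset.sum_neg_distrib]
        exact Finset.sum_congr rfl fun ℓ _ => by ring
      rw [Finset.sum_congr rfl fun j _ => h1 j, Finset.sum_comm, ← Finset.sum_neg_distrib]
      refine Finset.sum_congr rfl fun ℓ _ => ?_
      rw [Finset.sum_neg_distrib, ← Finset.mul_sum, hAs ℓ i]
    have hT : ∑ j, (∑ w ∈ W, Matrix.vecMulVec (Pi.single w (1:ℝ)) (Pi.single w 1)) i j * vv j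
        = ∑ w : W, u w * (if i = (w : V) then (1:ℝ) else 0) := by
      calc ∑ j, (∑ w ∈ W, Matrix.vecMulVec (Pi.single w (1:ℝ)) (Pi.single w 1)) i j * vv j
          = ∑ j, ∑ w ∈ W, (if i = w then (1:ℝ) else 0) * (if j = w then (1:ℝ) else 0) * vv j := by
            refine Finset.sum_congr rfl fun j _ => ?_
            rw [Matrix.sum_apply, Finset.sum_mul]
            refine Finset.sum_congr rfl fun w _ => ?_
            simp [Matrix.vecMulVec_apply, Pi.single_apply]
        _ = ∑ w ∈ W, (if i = w then (1:ℝ) else 0) * vv w := by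
            rw [Finset.sum_comm]
            refine Finset.sum_congr rfl fun w _ => ?_
            simp [ite_mul, mul_ite]
        _ = ∑ w : W, (if i = (w : V) then (1:ℝ) else 0) * vv (w : V) := by
            exact (Finset.sum_coe_sort W fun w => (if i = w then (1:ℝ) else 0) * vv w).symm
        _ = ∑ w : W, u w * (if i = (w : V) then (1:ℝ) else 0) := by
            refine Finset.sum_congr rfl fun w _ => ?_
            rw [hvW w]; ring
    have hmain : -γ * (∑ j, G.adjMatrix ℝ i j * vv j) - lam * vv i = ∑ ℓ, s ℓ i := by
      rw [hAvv, hvvs, mul_neg, mul_neg, sub_neg_eq_add, neg_mul, neg_neg, Finset.mul_sum,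
        Finset.mul_sum, ← Finset.sum_add_distrib]
      refine Finset.sum_congr rfl fun ℓ _ => ?_
      have hd := hden ℓ
      field_simp
      ring
    show ((searchH (G.adjMatrix ℝ) W γ).mulVec vv) i = (lam • vv) i
    rw [searchH, Matrix.sub_mulVec]
    simp only [Pi.sub_apply, Matrix.smul_mulVec, Pi.smul_apply, smul_eq_mul]
    rw [show ((G.adjMatrix ℝ).mulVec vv) i = ∑ j, G.adjMatrix ℝ i j * vv j from rfl,
      show ((∑ w ∈ W, Matrix.vecMulVec (Pi.single w (1:ℝ)) (Pi.single w 1)).mulVec vv) i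
        = ∑ j, (∑ w ∈ W, Matrix.vecMulVec (Pi.single w (1:ℝ)) (Pi.single w 1)) i j * vv j
        from rfl,
      hT, ← hSsum i]
    linarith [hmain]
  refine ⟨?_, heig, ⟨vv, ?_, heig⟩⟩ <;>
  · intro h0
    obtain ⟨w, hw⟩ := Function.ne_iff.mp hu
    exact hw (by rw [← hvW w, h0]; rfl)
end

section
/- Let λ⁻ be the smallest eigenvalue of H. Then: (a) the λ⁻-eigenspace of H is one-dimensional (λ⁻ is a simple eigenvalue); (b) every nonzero vector v with Hv = λ⁻v satisfies ⟨v, ψ(0)⟩ ≠ 0; and (c) λ⁻ < −γφ_0 for every γ > 0. -/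
/-!
The smallest eigenvalue of `H` is governed by Perron–Frobenius theory: `H` is symmetric, its
off-diagonal entries are `≤ 0`, and they are nonzero along the edges of the connected graph `G`.
For such a matrix and an eigenvector `v` of the smallest eigenvalue `λ`, the vector `|v|` has a
Rayleigh quotient no larger than that of `v`, so it is again a `λ`-eigenvector; the eigen-equation
at a vertex where `|v|` vanishes then forces `|v|` to vanish at all its neighbours, hence
everywhere. So no `λ`-eigenvector vanishes at a vertex, and any two of them are proportional (a
combination vanishing at one vertex is zero). The same holds for `-A`, whose bottom eigenvector
`ψ(0)` therefore has constant sign, as does the ground state of `H`; they cannot be orthogonal.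
Finally the Rayleigh quotient of `ψ(0)` for `H` is `-γφ₀ - ∑_{w ∈ W} ψ(0)_w² < -γφ₀`.
-/

open Matrix

variable {V : Type*} [Fintype V] [DecidableEq V]

theorem SimpleGraph.Reachable.imp_of_forall_adj {α : Type*} {G : SimpleGraph α} {P : α → Prop}
    (hP : ∀ ⦃i j⦄, G.Adj i j → P i → P j) {u v : α} (h : G.Reachable u v) (hu : P u) : P v := by
  obtain ⟨p⟩ := h
  induction p with
  | nil => exact hu
  | cons hadj _ ih => exact ih (hP hadj hu)

structure IsIrreducibleSymmZMatrix {n : Type*} (M : Matrix n n ℝ) : Prop where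
  isHermitian : M.IsHermitian
  nonpos_of_ne : ∀ ⦃i j⦄, i ≠ j → M i j ≤ 0
  connected : (SimpleGraph.fromRel fun i j => M i j ≠ 0).Connected

section Rayleigh

variable {n : Type*} [Fintype n] {M : Matrix n n ℝ} {lam : ℝ}

theorem IsEig.of_neg {μ : ℝ} (h : IsEig (-M) μ) : IsEig M (-μ) := by
  obtain ⟨x, hx0, hx⟩ := h
  exact ⟨x, hx0, by rw [neg_smul, ← hx, neg_mulVec, neg_neg]⟩

variable [DecidableEq n]

theorem Matrix.IsHermitian.isEig_eigenvalues (hM : M.IsHermitian) (i : n) :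
    IsEig M (hM.eigenvalues i) :=
  ⟨hM.eigenvectorBasis i, by simpa using hM.eigenvectorBasis.orthonormal.ne_zero i,
    hM.mulVec_eigenvectorBasis i⟩

theorem dotProduct_sub_smul_one_mulVec (x : n → ℝ) :
    x ⬝ᵥ (M - lam • 1) *ᵥ x = x ⬝ᵥ M *ᵥ x - lam * (x ⬝ᵥ x) := by
  rw [sub_mulVec, smul_mulVec, one_mulVec, dotProduct_sub, dotProduct_smul, smul_eq_mul]

theorem Matrix.IsHermitian.posSemidef_sub_smul_one (hM : M.IsHermitian)
    (hmin : ∀ μ, IsEig M μ → lam ≤ μ) : (M - lam • 1).PosSemidef := by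
  have hN : (M - lam • (1 : Matrix n n ℝ)).IsHermitian :=
    hM.sub (isHermitian_one.smul (IsSelfAdjoint.all lam))
  refine hN.posSemidef_iff_eigenvalues_nonneg.mpr fun i => ?_
  obtain ⟨x, hx0, hx⟩ := hN.isEig_eigenvalues i
  have hMx : M *ᵥ x = (hN.eigenvalues i + lam) • x := by
    rw [sub_mulVec, smul_mulVec, one_mulVec, sub_eq_iff_eq_add] at hx
    rw [hx, add_smul]
  simpa using hmin _ ⟨x, hx0, hMx⟩

theorem Matrix.IsHermitian.mul_dotProduct_self_le (hM : M.IsHermitian)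
    (hmin : ∀ μ, IsEig M μ → lam ≤ μ) (x : n → ℝ) : lam * (x ⬝ᵥ x) ≤ x ⬝ᵥ M *ᵥ x := by
  have h := (posSemidef_iff_dotProduct_mulVec.mp (hM.posSemidef_sub_smul_one hmin)).2 x
  rw [star_trivial, dotProduct_sub_smul_one_mulVec] at h
  linarith

theorem Matrix.IsHermitian.mulVec_eq_smul_of_dotProduct_eq (hM : M.IsHermitian)
    (hmin : ∀ μ, IsEig M μ → lam ≤ μ) {x : n → ℝ} (hx : x ⬝ᵥ M *ᵥ x = lam * (x ⬝ᵥ x)) :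
    M *ᵥ x = lam • x := by
  have h := (hM.posSemidef_sub_smul_one hmin).dotProduct_mulVec_zero_iff x
  rw [star_trivial, dotProduct_sub_smul_one_mulVec, hx, sub_self, sub_mulVec, smul_mulVec,
    one_mulVec, sub_eq_zero] at h
  exact h.mp rfl

end Rayleigh

namespace IsIrreducibleSymmZMatrix

variable {n : Type*} {M : Matrix n n ℝ}

theorem smul (hM : IsIrreducibleSymmZMatrix M) {c : ℝ} (hc : 0 < c) :
    IsIrreducibleSymmZMatrix (c • M) where
  isHermitian := hM.isHermitian.smul (IsSelfAdjoint.all c)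
  nonpos_of_ne _ _ hij := smul_nonpos_of_nonneg_of_nonpos hc.le (hM.nonpos_of_ne hij)
  connected := hM.connected.mono fun i j hij => by simpa [hc.ne'] using hij

theorem sub_diagonal [DecidableEq n] (hM : IsIrreducibleSymmZMatrix M) (d : n → ℝ) :
    IsIrreducibleSymmZMatrix (M - diagonal d) where
  isHermitian := hM.isHermitian.sub (isHermitian_diagonal d)
  nonpos_of_ne _ _ hij := by simpa [diagonal_apply_ne _ hij] using hM.nonpos_of_ne hij
  connected := hM.connected.mono fun i j hij => by
    simpa [SimpleGraph.fromRel_adj, diagonal_apply_ne _ hij.1, diagonal_apply_ne _ hij.1.symm]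
      using hij

variable [Fintype n] {lam : ℝ} {u v : n → ℝ}

theorem dotProduct_mulVec_abs_le (hM : IsIrreducibleSymmZMatrix M) (v : n → ℝ) :
    |v| ⬝ᵥ M *ᵥ |v| ≤ v ⬝ᵥ M *ᵥ v := by
  simp only [dotProduct, mulVec, Finset.mul_sum, Pi.abs_apply]
  refine Finset.sum_le_sum fun i _ => Finset.sum_le_sum fun j _ => ?_
  rcases eq_or_ne i j with rfl | hij
  · exact le_of_eq (by linear_combination M i i * abs_mul_abs_self (v i))
  · nlinarith [hM.nonpos_of_ne hij, abs_mul_abs_self (v i), abs_mul_abs_self (v j),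
      abs_mul (v i) (v j), le_abs_self (v i * v j)]

/-- In `(M s) i = lam * s i = 0` every term `M i k * s k` is `≤ 0`, so each one vanishes. -/
theorem apply_eq_zero_of_ne_zero (hM : IsIrreducibleSymmZMatrix M) {s : n → ℝ} (hs : 0 ≤ s)
    (hMs : M *ᵥ s = lam • s) {i j : n} (hij : M i j ≠ 0) (hi : s i = 0) : s j = 0 := by
  have hsum : ∑ k, M i k * s k = 0 := by
    have := congrFun hMs i
    rwa [Pi.smul_apply, hi, smul_zero] at this
  have hterm : ∀ k ∈ Finset.univ, M i k * s k ≤ 0 := by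
    intro k _
    rcases eq_or_ne i k with rfl | hik
    · simp [hi]
    · exact mul_nonpos_of_nonpos_of_nonneg (hM.nonpos_of_ne hik) (hs k)
  have := (Finset.sum_eq_zero_iff_of_nonpos hterm).mp hsum j (Finset.mem_univ j)
  exact (mul_eq_zero.mp this).resolve_left hij

variable [DecidableEq n]

theorem mulVec_abs_eq_smul (hM : IsIrreducibleSymmZMatrix M) (hmin : ∀ μ, IsEig M μ → lam ≤ μ)
    (hv : M *ᵥ v = lam • v) : M *ᵥ |v| = lam • |v| := by
  have habs : |v| ⬝ᵥ |v| = v ⬝ᵥ v :=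
    Finset.sum_congr rfl fun i _ => abs_mul_abs_self (v i)
  have hq : v ⬝ᵥ M *ᵥ v = lam * (v ⬝ᵥ v) := by rw [hv, dotProduct_smul, smul_eq_mul]
  refine hM.isHermitian.mulVec_eq_smul_of_dotProduct_eq hmin (le_antisymm ?_ ?_)
  · rw [habs, ← hq]
    exact hM.dotProduct_mulVec_abs_le v
  · exact hM.isHermitian.mul_dotProduct_self_le hmin |v|

theorem apply_ne_zero (hM : IsIrreducibleSymmZMatrix M) (hmin : ∀ μ, IsEig M μ → lam ≤ μ)
    (hv : M *ᵥ v = lam • v) (hv0 : v ≠ 0) (i : n) : v i ≠ 0 := by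
  intro hi
  obtain ⟨j, hj⟩ := Function.ne_iff.mp hv0
  have hprop : ∀ ⦃k l⦄, (SimpleGraph.fromRel fun i j => M i j ≠ 0).Adj k l →
      |v| k = 0 → |v| l = 0 := by
    intro k l hkl
    have hMkl : M k l ≠ 0 := by
      rcases ((SimpleGraph.fromRel_adj _ _ _).mp hkl).2 with h | h
      · exact h
      · rwa [← hM.isHermitian.apply k l, star_trivial]
    exact hM.apply_eq_zero_of_ne_zero (abs_nonneg v) (hM.mulVec_abs_eq_smul hmin hv) hMkl
  have := (hM.connected.preconnected i j).imp_of_forall_adj hprop (by simp [hi])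
  exact hj (by simpa using this)

theorem exists_eq_smul (hM : IsIrreducibleSymmZMatrix M) (hmin : ∀ μ, IsEig M μ → lam ≤ μ)
    (hu : M *ᵥ u = lam • u) (hv : M *ᵥ v = lam • v) (hv0 : v ≠ 0) : ∃ c : ℝ, u = c • v := by
  obtain ⟨i, hi⟩ := Function.ne_iff.mp hv0
  have hw : M *ᵥ (v i • u - u i • v) = lam • (v i • u - u i • v) := by
    rw [mulVec_sub, mulVec_smul, mulVec_smul, hu, hv]
    module
  have hw0 : v i • u - u i • v = 0 := by
    by_contra hne
    exact hM.apply_ne_zero hmin hw hne i (by simp [mul_comm])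
  refine ⟨u i / v i, ?_⟩
  rw [div_eq_inv_mul, mul_smul, ← sub_eq_zero.mp hw0, smul_smul, inv_mul_cancel₀ hi, one_smul]

theorem finrank_eigenspace_eq_one (hM : IsIrreducibleSymmZMatrix M)
    (hmin : ∀ μ, IsEig M μ → lam ≤ μ) (hlam : IsEig M lam) :
    Module.finrank ℝ (Module.End.eigenspace (mulVecLin M) lam) = 1 := by
  obtain ⟨v, hv0, hv⟩ := hlam
  have hmem : ∀ {x}, x ∈ Module.End.eigenspace (mulVecLin M) lam ↔ M *ᵥ x = lam • x := by
    intro x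
    rw [Module.End.mem_eigenspace_iff, mulVecLin_apply]
  refine (finrank_eq_one_iff_of_nonzero' (K := ℝ) ⟨v, hmem.mpr hv⟩ (by simpa using hv0)).mpr ?_
  rintro ⟨u, hu⟩
  obtain ⟨c, rfl⟩ := hM.exists_eq_smul hmin (hmem.mp hu) hv hv0
  exact ⟨c, Subtype.ext rfl⟩

theorem eq_smul_abs (hM : IsIrreducibleSymmZMatrix M) (hmin : ∀ μ, IsEig M μ → lam ≤ μ)
    (hv : M *ᵥ v = lam • v) (hv0 : v ≠ 0) : ∃ c : ℝ, c ≠ 0 ∧ v = c • |v| := by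
  have habs0 : |v| ≠ 0 := by simpa using hv0
  obtain ⟨c, hc⟩ := hM.exists_eq_smul hmin hv (hM.mulVec_abs_eq_smul hmin hv) habs0
  exact ⟨c, by rintro rfl; exact hv0 (by simpa using hc), hc⟩

theorem dotProduct_ne_zero {N : Matrix n n ℝ} {mu : ℝ} (hM : IsIrreducibleSymmZMatrix M)
    (hN : IsIrreducibleSymmZMatrix N) (hminM : ∀ μ, IsEig M μ → lam ≤ μ)
    (hminN : ∀ μ, IsEig N μ → mu ≤ μ) (hu : M *ᵥ u = lam • u) (hv : N *ᵥ v = mu • v)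
    (hu0 : u ≠ 0) (hv0 : v ≠ 0) : u ⬝ᵥ v ≠ 0 := by
  obtain ⟨c, hc0, hc⟩ := hM.eq_smul_abs hminM hu hu0
  obtain ⟨d, hd0, hd⟩ := hN.eq_smul_abs hminN hv hv0
  obtain ⟨i, -⟩ := Function.ne_iff.mp hu0
  have hpos : 0 < |u| ⬝ᵥ |v| :=
    Finset.sum_pos (fun j _ => mul_pos (abs_pos.mpr (hM.apply_ne_zero hminM hu hu0 j))
      (abs_pos.mpr (hN.apply_ne_zero hminN hv hv0 j))) ⟨i, Finset.mem_univ i⟩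
  rw [hc, hd, smul_dotProduct, dotProduct_smul]
  exact smul_ne_zero hc0 (smul_ne_zero hd0 hpos.ne')

end IsIrreducibleSymmZMatrix

theorem isIrreducibleSymmZMatrix_neg_adjMatrix {n : Type*} (G : SimpleGraph n)
    [DecidableRel G.Adj] (hG : G.Connected) : IsIrreducibleSymmZMatrix (-G.adjMatrix ℝ) where
  isHermitian := (G.isSymm_adjMatrix).neg
  nonpos_of_ne i j _ := neg_nonpos.mpr (by rw [SimpleGraph.adjMatrix_apply]; split_ifs <;> norm_num)
  connected := hG.mono fun i j hij => by simp [hij.ne, hij]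

theorem sum_vecMulVec_single {n : Type*} [DecidableEq n] (W : Finset n) :
    ∑ w ∈ W, vecMulVec (Pi.single w (1 : ℝ)) (Pi.single w 1) =
      diagonal fun i => if i ∈ W then 1 else 0 := by
  ext i j
  simp only [Matrix.sum_apply, vecMulVec_apply, Pi.single_apply, diagonal_apply]
  split_ifs <;> simp_all

theorem searchH_eq {n : Type*} [DecidableEq n] (A : Matrix n n ℝ) (W : Finset n) (γ : ℝ) :
    searchH A W γ = γ • -A - diagonal fun i => if i ∈ W then 1 else 0 := by
  rw [searchH, sum_vecMulVec_single, neg_smul, smul_neg]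

theorem dotProduct_searchH_mulVec {n : Type*} [Fintype n] [DecidableEq n] {A : Matrix n n ℝ}
    {φ : ℝ} {ψ : n → ℝ} (W : Finset n) (γ : ℝ) (hψ : A *ᵥ ψ = φ • ψ) :
    ψ ⬝ᵥ searchH A W γ *ᵥ ψ = -γ * φ * (ψ ⬝ᵥ ψ) - ∑ w ∈ W, ψ w ^ 2 := by
  have hdiag : ψ ⬝ᵥ diagonal (fun i => if i ∈ W then (1 : ℝ) else 0) *ᵥ ψ =
      ∑ w ∈ W, ψ w ^ 2 := by
    simp [dotProduct, mulVec_diagonal, Finset.sum_ite_mem, sq]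
  rw [searchH_eq, sub_mulVec, smul_mulVec, neg_mulVec, hψ, dotProduct_sub, dotProduct_smul,
    dotProduct_neg, dotProduct_smul, hdiag, smul_eq_mul, smul_eq_mul]
  ring

theorem stmt5 (G : SimpleGraph V) [DecidableRel G.Adj] (hG : G.Connected)
    (W : Finset V) (hW : W.Nonempty) (γ : ℝ) (hγ : 0 < γ)
    (φ₀ : ℝ) (hφ₀ : IsEig (G.adjMatrix ℝ) φ₀ ∧ ∀ μ, IsEig (G.adjMatrix ℝ) μ → μ ≤ φ₀)
    (ψ : V → ℝ) (hψeig : (G.adjMatrix ℝ).mulVec ψ = φ₀ • ψ) (hψunit : ∑ i, ψ i ^ 2 = 1)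
    (lam : ℝ)
    (hlam : IsEig (searchH (G.adjMatrix ℝ) W γ) lam ∧
      ∀ μ, IsEig (searchH (G.adjMatrix ℝ) W γ) μ → lam ≤ μ) :
    Module.finrank ℝ
        ↥(Module.End.eigenspace (Matrix.mulVecLin (searchH (G.adjMatrix ℝ) W γ)) lam) = 1 ∧
      (∀ v : V → ℝ, v ≠ 0 → (searchH (G.adjMatrix ℝ) W γ).mulVec v = lam • v →
        v ⬝ᵥ ψ ≠ 0) ∧
      lam < -γ * φ₀ := by
  have hA := isIrreducibleSymmZMatrix_neg_adjMatrix G hG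
  have hH : IsIrreducibleSymmZMatrix (searchH (G.adjMatrix ℝ) W γ) :=
    searchH_eq (G.adjMatrix ℝ) W γ ▸ (hA.smul hγ).sub_diagonal _
  have hminA : ∀ μ, IsEig (-G.adjMatrix ℝ) μ → -φ₀ ≤ μ :=
    fun μ h => neg_le.mpr (hφ₀.2 _ h.of_neg)
  have hψ : (-G.adjMatrix ℝ) *ᵥ ψ = (-φ₀) • ψ := by rw [neg_mulVec, hψeig, neg_smul]
  have hψψ : ψ ⬝ᵥ ψ = 1 := by simpa [dotProduct, sq] using hψunit
  have hψ0 : ψ ≠ 0 := by rintro rfl; simp at hψψ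
  refine ⟨hH.finrank_eigenspace_eq_one hlam.2 hlam.1,
    fun v hv0 hv => hH.dotProduct_ne_zero hA hlam.2 hminA hv hψ hv0 hψ0, ?_⟩
  obtain ⟨w, hw⟩ := hW
  have hmarked : 0 < ∑ w ∈ W, ψ w ^ 2 :=
    Finset.sum_pos' (fun _ _ => sq_nonneg _)
      ⟨w, hw, pow_two_pos_of_ne_zero (hA.apply_ne_zero hminA hψ hψ0 w)⟩
  have hray := hH.isHermitian.mul_dotProduct_self_le hlam.2 ψ
  rw [dotProduct_searchH_mulVec W γ hψeig, hψψ] at hray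
  linarith
end

section
/- Let n ≥ k ≥ 1 be integers and let w1, w2 be k-element subsets of {1,…,n}. For any two k-element subsets v and v' of {1,…,n}, there exists a permutation g of {1,…,n} (acting on subsets elementwise) with {g(w1), g(w2)} = {w1, w2} and g(v) = v' if and only if |v ∩ w1 ∩ w2| = |v' ∩ w1 ∩ w2| and the unordered pairs {|v ∩ w1|, |v ∩ w2|} and {|v' ∩ w1|, |v' ∩ w2|} are equal. -/
open Finset

variable {α : Type*} [Fintype α] [DecidableEq α]

private lemma pair_eq' {β : Type*} [DecidableEq β] {a b c d : β}
    (h : ({a, b} : Finset β) = {c, d}) :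
    (a = c ∧ b = d) ∨ (a = d ∧ b = c) := by
  have ha : a ∈ ({c, d} : Finset β) := by rw [← h]; simp
  have hb : b ∈ ({c, d} : Finset β) := by rw [← h]; simp
  have hc : c ∈ ({a, b} : Finset β) := by rw [h]; simp
  have hd : d ∈ ({a, b} : Finset β) := by rw [h]; simp
  simp only [mem_insert, mem_singleton] at ha hb hc hd
  rcases ha with h1 | h1 <;> rcases hb with h2 | h2 <;>
    rcases hc with h3 | h3 <;> rcases hd with h4 | h4 <;> subst_vars <;> tauto

private lemma glue {ι : Type*} [Fintype ι] (S T : ι → Finset α)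
    (hSd : ∀ i j, i ≠ j → Disjoint (S i) (S j))
    (hTd : ∀ i j, i ≠ j → Disjoint (T i) (T j))
    (hScov : ∀ x, ∃ i, x ∈ S i)
    (hcard : ∀ i, (S i).card = (T i).card) :
    ∃ g : Equiv.Perm α, ∀ i, (S i).image g = T i := by
  classical
  choose idx hidx using hScov
  let e : ∀ i, (S i : Finset α) ≃ (T i : Finset α) := fun i => Finset.equivOfCardEq (hcard i)
  let f : α → α := fun x => (e (idx x) ⟨x, hidx x⟩ : α)
  have hfT : ∀ x, f x ∈ T (idx x) := fun x => (e (idx x) ⟨x, hidx x⟩).2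
  have key : ∀ (x y : α) (i j : ι) (h : i = j) (hx : x ∈ S i) (hy : y ∈ S j),
      ((e i ⟨x, hx⟩ : α) = (e j ⟨y, hy⟩ : α)) → x = y := by
    rintro x y i j rfl hx hy h
    have := (e i).injective (Subtype.ext h)
    exact congrArg Subtype.val this
  have hinj : Function.Injective f := by
    intro x y hxy
    have hix : idx x = idx y := by
      by_contra hne
      exact Finset.disjoint_left.mp (hTd _ _ hne) (hfT x) (hxy ▸ hfT y)
    exact key x y (idx x) (idx y) hix (hidx x) (hidx y) hxy
  refine ⟨Equiv.ofBijective f (Finite.injective_iff_bijective.mp hinj), fun i => ?_⟩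
  apply Finset.eq_of_subset_of_card_le
  · intro z hz
    obtain ⟨x, hx, rfl⟩ := Finset.mem_image.mp hz
    have hxi : idx x = i := by
      by_contra hne
      exact Finset.disjoint_left.mp (hSd _ _ hne) (hidx x) hx
    have hfx := hfT x
    rw [hxi] at hfx
    exact hfx
  · exact le_of_eq ((hcard i).symm.trans (Finset.card_image_of_injective (S i) hinj).symm)

private lemma splitu (a u : Finset α) :
    (a ∩ u).card + (a ∩ uᶜ).card = a.card := by
  have h : a ∩ uᶜ = a \ u := by ext x; simp [Finset.mem_compl, Finset.mem_sdiff]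
  rw [h]
  exact Finset.card_inter_add_card_sdiff a u

private lemma splitmid (s t u : Finset α) :
    (s ∩ t ∩ u).card + (s ∩ tᶜ ∩ u).card = (s ∩ u).card := by
  have h1 : s ∩ t ∩ u = (s ∩ u) ∩ t := by ext x; simp; tauto
  have h2 : s ∩ tᶜ ∩ u = (s ∩ u) ∩ tᶜ := by ext x; simp [Finset.mem_compl]; tauto
  rw [h1, h2]; exact splitu (s ∩ u) t

private lemma splitfst3 (s t u : Finset α) :
    (s ∩ t ∩ u).card + (sᶜ ∩ t ∩ u).card = (t ∩ u).card := by
  have h1 : s ∩ t ∩ u = (t ∩ u) ∩ s := by ext x; simp; tauto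
  have h2 : sᶜ ∩ t ∩ u = (t ∩ u) ∩ sᶜ := by ext x; simp [Finset.mem_compl]; tauto
  rw [h1, h2]; exact splitu (t ∩ u) s

private lemma splitfst2 (s u : Finset α) :
    (s ∩ u).card + (sᶜ ∩ u).card = u.card := by
  have h1 : s ∩ u = u ∩ s := Finset.inter_comm s u
  have h2 : sᶜ ∩ u = u ∩ sᶜ := Finset.inter_comm _ u
  rw [h1, h2]; exact splitu u s

private lemma main_case (a1 a2 a3 b1 b2 b3 : Finset α)
    (e1 : a1.card = b1.card) (e2 : a2.card = b2.card) (e3 : a3.card = b3.card)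
    (e12 : (a1 ∩ a2).card = (b1 ∩ b2).card)
    (e13 : (a1 ∩ a3).card = (b1 ∩ b3).card)
    (e23 : (a2 ∩ a3).card = (b2 ∩ b3).card)
    (e123 : (a1 ∩ a2 ∩ a3).card = (b1 ∩ b2 ∩ b3).card) :
    ∃ g : Equiv.Perm α, a1.image g = b1 ∧ a2.image g = b2 ∧ a3.image g = b3 := by
  classical
  let pc : Bool → Finset α → Finset α := fun b s => bif b then s else sᶜ
  let S : Bool × Bool × Bool → Finset α := fun b => pc b.1 a1 ∩ pc b.2.1 a2 ∩ pc b.2.2 a3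
  let T : Bool × Bool × Bool → Finset α := fun b => pc b.1 b1 ∩ pc b.2.1 b2 ∩ pc b.2.2 b3
  have hpcmem : ∀ (b c : Bool) (s : Finset α) (x : α), x ∈ pc b s → x ∈ pc c s → b = c := by
    rintro (_ | _) (_ | _) s x h1 h2 <;> simp_all [pc, Finset.mem_compl]
  have hself : ∀ (s : Finset α) (x : α), x ∈ pc (decide (x ∈ s)) s := by
    intro s x; by_cases h : x ∈ s <;> simp [pc, h]
  have hdisj : ∀ (c1 c2 c3 : Finset α) (i j : Bool × Bool × Bool), i ≠ j →
      Disjoint (pc i.1 c1 ∩ pc i.2.1 c2 ∩ pc i.2.2 c3)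
        (pc j.1 c1 ∩ pc j.2.1 c2 ∩ pc j.2.2 c3) := by
    intro c1 c2 c3 i j hne
    rw [Finset.disjoint_left]
    intro x hx1 hx2
    simp only [Finset.mem_inter] at hx1 hx2
    exact hne (Prod.ext (hpcmem _ _ _ _ hx1.1.1 hx2.1.1)
      (Prod.ext (hpcmem _ _ _ _ hx1.1.2 hx2.1.2) (hpcmem _ _ _ _ hx1.2 hx2.2)))
  have hcov : ∀ (c1 c2 c3 : Finset α) (x : α),
      x ∈ pc (decide (x ∈ c1)) c1 ∩ pc (decide (x ∈ c2)) c2 ∩ pc (decide (x ∈ c3)) c3 := by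
    intro c1 c2 c3 x
    exact Finset.mem_inter.mpr ⟨Finset.mem_inter.mpr ⟨hself c1 x, hself c2 x⟩, hself c3 x⟩
  have hcard : ∀ i, (S i).card = (T i).card := by
    have q1 := splitu (a1 ∩ a2) a3
    have q2 := splitu (a1 ∩ a2ᶜ) a3
    have q3 := splitu (a1ᶜ ∩ a2) a3
    have q4 := splitu (a1ᶜ ∩ a2ᶜ) a3
    have q5 := splitu a1 a2
    have q6 := splitu a1ᶜ a2
    have q7 := Finset.card_add_card_compl a1
    have q8 := splitmid a1 a2 a3
    have q9 := splitmid a1ᶜ a2 a3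
    have q10 := splitfst3 a1 a2 a3
    have q11 := splitfst2 a1 a3
    have q12 := splitfst2 a1 a2
    have r1 := splitu (b1 ∩ b2) b3
    have r2 := splitu (b1 ∩ b2ᶜ) b3
    have r3 := splitu (b1ᶜ ∩ b2) b3
    have r4 := splitu (b1ᶜ ∩ b2ᶜ) b3
    have r5 := splitu b1 b2
    have r6 := splitu b1ᶜ b2
    have r7 := Finset.card_add_card_compl b1
    have r8 := splitmid b1 b2 b3
    have r9 := splitmid b1ᶜ b2 b3
    have r10 := splitfst3 b1 b2 b3
    have r11 := splitfst2 b1 b3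
    have r12 := splitfst2 b1 b2
    rintro ⟨(_ | _), (_ | _), (_ | _)⟩ <;>
      simp only [S, T, pc, Bool.cond_true, Bool.cond_false] <;> omega
  obtain ⟨g, hg⟩ := glue S T (hdisj a1 a2 a3) (hdisj b1 b2 b3)
    (fun x => ⟨(decide (x ∈ a1), decide (x ∈ a2), decide (x ∈ a3)), hcov a1 a2 a3 x⟩) hcard
  have himg : ∀ (x : α), g x ∈ pc (decide (x ∈ a1)) b1 ∩ pc (decide (x ∈ a2)) b2
      ∩ pc (decide (x ∈ a3)) b3 := by
    intro x
    have hx : x ∈ S (decide (x ∈ a1), decide (x ∈ a2), decide (x ∈ a3)) := hcov a1 a2 a3 x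
    have h2 : g x ∈ T (decide (x ∈ a1), decide (x ∈ a2), decide (x ∈ a3)) := by
      rw [← hg]
      exact Finset.mem_image_of_mem _ hx
    exact h2
  have himg1 : ∀ (s t : Finset α) (x : α), x ∈ s → s.card = t.card →
      (∀ y, y ∈ s → decide (y ∈ s) = true) → True := fun _ _ _ _ _ _ => trivial
  refine ⟨g, ?_, ?_, ?_⟩
  · apply Finset.eq_of_subset_of_card_le
    · intro z hz
      obtain ⟨x, hx, rfl⟩ := Finset.mem_image.mp hz
      have h := himg x
      rw [show decide (x ∈ a1) = true by simp [hx]] at h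
      simp only [Finset.mem_inter] at h
      simpa [pc] using h.1.1
    · rw [Finset.card_image_of_injective _ g.injective, ← e1]
  · apply Finset.eq_of_subset_of_card_le
    · intro z hz
      obtain ⟨x, hx, rfl⟩ := Finset.mem_image.mp hz
      have h := himg x
      rw [show decide (x ∈ a2) = true by simp [hx]] at h
      simp only [Finset.mem_inter] at h
      simpa [pc] using h.1.2
    · rw [Finset.card_image_of_injective _ g.injective, ← e2]
  · apply Finset.eq_of_subset_of_card_le
    · intro z hz
      obtain ⟨x, hx, rfl⟩ := Finset.mem_image.mp hz
      have h := himg x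
      rw [show decide (x ∈ a3) = true by simp [hx]] at h
      simp only [Finset.mem_inter] at h
      simpa [pc] using h.2
    · rw [Finset.card_image_of_injective _ g.injective, ← e3]

theorem stmt7 (n k : ℕ) (hk : 1 ≤ k) (hkn : k ≤ n)
    (w1 w2 v v' : Finset (Fin n))
    (hw1 : w1.card = k) (hw2 : w2.card = k) (hv : v.card = k) (hv' : v'.card = k) :
    (∃ g : Equiv.Perm (Fin n),
        ({w1.image ⇑g, w2.image ⇑g} : Finset (Finset (Fin n))) = {w1, w2} ∧
          v.image ⇑g = v')
      ↔ ((v ∩ w1 ∩ w2).card = (v' ∩ w1 ∩ w2).card ∧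
          ({(v ∩ w1).card, (v ∩ w2).card} : Finset ℕ)
            = {(v' ∩ w1).card, (v' ∩ w2).card}) := by
  classical
  constructor
  · rintro ⟨g, hpair, hgv⟩
    have himg : ∀ s t : Finset (Fin n), (s ∩ t).image g = s.image g ∩ t.image g :=
      fun s t => Finset.image_inter s t g.injective
    have hcardim : ∀ s : Finset (Fin n), (s.image g).card = s.card :=
      fun s => Finset.card_image_of_injective s g.injective
    rcases pair_eq' hpair with ⟨h1, h2⟩ | ⟨h1, h2⟩
    · have k1 : v' ∩ w1 ∩ w2 = (v ∩ w1 ∩ w2).image ⇑g := by rw [himg, himg, hgv, h1, h2]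
      have k2 : v' ∩ w1 = (v ∩ w1).image ⇑g := by rw [himg, hgv, h1]
      have k3 : v' ∩ w2 = (v ∩ w2).image ⇑g := by rw [himg, hgv, h2]
      rw [k1, k2, k3, hcardim, hcardim, hcardim]
      exact ⟨rfl, rfl⟩
    · have k1 : v' ∩ w1 ∩ w2 = (v ∩ w2 ∩ w1).image ⇑g := by rw [himg, himg, hgv, h2, h1]
      have k2 : v' ∩ w1 = (v ∩ w2).image ⇑g := by rw [himg, hgv, h2]
      have k3 : v' ∩ w2 = (v ∩ w1).image ⇑g := by rw [himg, hgv, h1]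
      have k4 : v ∩ w2 ∩ w1 = v ∩ w1 ∩ w2 := by
        ext x; simp only [Finset.mem_inter]; tauto
      rw [k1, k2, k3, hcardim, hcardim, hcardim, k4]
      exact ⟨rfl, Finset.pair_comm _ _⟩
  · rintro ⟨h3, hpair⟩
    have hac : v ∩ w1 ∩ w2 = w1 ∩ w2 ∩ v := by
      ext x; simp only [Finset.mem_inter]; tauto
    have hac' : v' ∩ w1 ∩ w2 = w1 ∩ w2 ∩ v' := by
      ext x; simp only [Finset.mem_inter]; tauto
    rcases pair_eq' hpair with ⟨h1, h2⟩ | ⟨h1, h2⟩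
    · obtain ⟨g, hg1, hg2, hg3⟩ := main_case w1 w2 v w1 w2 v' rfl rfl
        (hv.trans hv'.symm) rfl
        (by rw [Finset.inter_comm w1 v, Finset.inter_comm w1 v']; exact h1)
        (by rw [Finset.inter_comm w2 v, Finset.inter_comm w2 v']; exact h2)
        (by rw [← hac, ← hac']; exact h3)
      exact ⟨g, by rw [hg1, hg2], hg3⟩
    · obtain ⟨g, hg1, hg2, hg3⟩ := main_case w1 w2 v w2 w1 v'
        (hw1.trans hw2.symm) (hw2.trans hw1.symm) (hv.trans hv'.symm)
        (congrArg Finset.card (Finset.inter_comm w1 w2))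
        (by rw [Finset.inter_comm w1 v, Finset.inter_comm w2 v']; exact h1)
        (by rw [Finset.inter_comm w2 v, Finset.inter_comm w1 v']; exact h2)
        (by rw [← hac, show w2 ∩ w1 ∩ v' = v' ∩ w1 ∩ w2 by
          ext x; simp only [Finset.mem_inter]; tauto]; exact h3)
      exact ⟨g, by rw [hg1, hg2]; exact Finset.pair_comm _ _, hg3⟩
end

section
/- Let n, k, ℓ, δ be integers with 0 ≤ ℓ ≤ k, 0 ≤ δ ≤ k, and n ≥ 2k. Then Σ_{j=0}^{δ} [(−ℓ)_j (−δ)_j (ℓ−n−1)_j] / [(k−n)_j (−k)_j · j!] = (δ! / (k−n)_δ) · Σ_{j=0}^{δ} [(ℓ−k)_j (−δ)_j (n−k−ℓ+1)_j] / [(1)_j (−k)_j · j!], where both sides are rational numbers (all denominator factors being nonzero for the indices j with nonzero numerator). -/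
/-- The shifted factorial (Pochhammer symbol) `(a)_m = a(a+1)⋯(a+m−1)`, with `(a)_0 = 1`. -/
noncomputable def poch (a : ℝ) (m : ℕ) : ℝ := (ascPochhammer ℝ m).eval a

/-!
Both sides are instances of Sheppard's transformation of a terminating ₃F₂,
`∑_j (-d)_j (a)_j (b)_j / ((c)_j (e)_j j!) = ∑_i C(d,i) (a)_i (c-b)_i (e-a)_{d-i} / ((c)_i (e)_d)`,
taken with `(a, b, c, e) = (ℓ-n-1, -ℓ, -k, k-n)` on the left and `(ℓ-k, n-k-ℓ+1, -k, 1)` on the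
right: the two transformed sums agree term by term up to the factor `δ! / (k-n)_δ`.
With denominators cleared, Sheppard's transformation follows by expanding `(b)_j` with the
Vandermonde-type identity `(y-x)_j = ∑_i C(j,i) (-1)^i (x)_i (y+i)_{j-i}`, exchanging the two
sums, and summing the inner one with the same identity.
-/

open Finset

lemma poch_succ_left (a : ℝ) (m : ℕ) : poch a (m + 1) = a * poch (a + 1) m := by
  simp [poch, ascPochhammer_succ_left, Polynomial.eval_comp]

lemma poch_succ (a : ℝ) (m : ℕ) : poch a (m + 1) = poch a m * (a + m) :=
  ascPochhammer_succ_eval m a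

lemma poch_mul_poch_add (a : ℝ) (m l : ℕ) : poch a m * poch (a + m) l = poch a (m + l) := by
  simpa [poch, Polynomial.eval_comp] using congrArg (Polynomial.eval a) (ascPochhammer_mul ℝ m l)

lemma poch_mul_poch_add_sub (a : ℝ) {i j : ℕ} (h : i ≤ j) :
    poch a i * poch (a + i) (j - i) = poch a j := by
  rw [poch_mul_poch_add, Nat.add_sub_cancel' h]

lemma poch_add_mul_poch_add (a : ℝ) {i j d : ℕ} (hij : i ≤ j) (hjd : j ≤ d) :
    poch (a + i) (j - i) * poch (a + j) (d - j) = poch (a + i) (d - i) := by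
  have h := poch_mul_poch_add (a + i) (j - i) (d - j)
  rwa [Nat.cast_sub hij, add_add_sub_cancel, show j - i + (d - j) = d - i by omega] at h

lemma poch_eq_zero_iff (a : ℝ) (m : ℕ) : poch a m = 0 ↔ ∃ t < m, (t : ℝ) = -a :=
  ascPochhammer_eval_eq_zero_iff m a

lemma poch_one (m : ℕ) : poch 1 m = m.factorial := by
  simp [poch]

lemma poch_neg_natCast (d j : ℕ) : poch (-(d : ℝ)) j = (-1) ^ j * d.choose j * j.factorial := by
  rw [poch, ascPochhammer_eval_neg_eq_descPochhammer, descPochhammer_eval_eq_descFactorial,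
    Nat.descFactorial_eq_factorial_mul_choose]
  push_cast
  ring

lemma poch_sub_eq_sum_choose (x : ℝ) (j : ℕ) (y : ℝ) :
    poch (y - x) j =
      ∑ i ∈ range (j + 1), (j.choose i : ℝ) * ((-1) ^ i * poch x i * poch (y + i) (j - i)) := by
  induction j generalizing y with
  | zero => simp [poch]
  | succ j ih =>
    rw [sum_choose_succ_mul (fun i l => (-1) ^ i * poch x i * poch (y + i) l), ← sum_add_distrib,
      poch_succ_left, show y - x + 1 = y + 1 - x by ring, ih, mul_sum]
    refine sum_congr rfl fun i hi => ?_
    rw [show j + 1 - i = j - i + 1 by have := mem_range.mp hi; omega, poch_succ_left (y + i),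
      poch_succ x i, pow_succ, show y + 1 + i = y + i + 1 by ring, Nat.cast_succ, ← add_assoc]
    ring

lemma sheppard_transformation_mul (d : ℕ) (a b c e : ℝ) :
    ∑ j ∈ range (d + 1), (-1) ^ j * (d.choose j : ℝ) * poch a j * poch b j
        * poch (c + j) (d - j) * poch (e + j) (d - j)
      = ∑ i ∈ range (d + 1), (d.choose i : ℝ) * poch a i * poch (c - b) i
          * poch (c + i) (d - i) * poch (e - a) (d - i) := by
  let T : ℕ → ℕ → ℝ := fun i j => (-1) ^ j * (-1) ^ i * (d.choose j * j.choose i : ℕ)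
    * poch a j * poch (c - b) i * poch (c + i) (d - i) * poch (e + j) (d - j)
  calc _ = ∑ j ∈ range (d + 1), ∑ i ∈ range (j + 1), T i j := by
        refine sum_congr rfl fun j hj => ?_
        have hb : poch b j = ∑ i ∈ range (j + 1),
            (j.choose i : ℝ) * ((-1) ^ i * poch (c - b) i * poch (c + i) (j - i)) := by
          rw [← poch_sub_eq_sum_choose, sub_sub_cancel]
        rw [hb, mul_sum, sum_mul, sum_mul]
        refine sum_congr rfl fun i hi => ?_
        simp only [T]
        rw [← poch_add_mul_poch_add c (Nat.lt_succ_iff.mp (mem_range.mp hi))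
          (Nat.lt_succ_iff.mp (mem_range.mp hj))]
        push_cast
        ring
    _ = ∑ i ∈ range (d + 1), ∑ j ∈ Ico i (d + 1), T i j := by
        simp only [range_eq_Ico]
        exact sum_Ico_Ico_comm 0 (d + 1) T |>.symm
    _ = ∑ i ∈ range (d + 1), (d.choose i : ℝ) * poch a i * poch (c - b) i * poch (c + i) (d - i)
          * ∑ m ∈ range (d - i + 1), ((d - i).choose m : ℝ)
              * ((-1) ^ m * poch (a + i) m * poch (e + i + m) (d - i - m)) := by
        refine sum_congr rfl fun i hi => ?_
        have hid : i ≤ d := Nat.lt_succ_iff.mp (mem_range.mp hi)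
        rw [sum_Ico_eq_sum_range, show d + 1 - i = d - i + 1 by omega, mul_sum]
        refine sum_congr rfl fun m hm => ?_
        have hsign : (-1 : ℝ) ^ (i + m) * (-1) ^ i = (-1) ^ m := by
          rw [pow_add, mul_right_comm, ← pow_add, Even.neg_one_pow ⟨i, rfl⟩, one_mul]
        simp only [T]
        rw [hsign, Nat.choose_mul (Nat.le_add_right i m), Nat.add_sub_cancel_left,
          ← poch_mul_poch_add a i m, show d - (i + m) = d - i - m by omega]
        push_cast [← add_assoc]
        ring
    _ = _ := by
        refine sum_congr rfl fun i _ => ?_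
        rw [← poch_sub_eq_sum_choose, add_sub_add_right_eq_sub]

lemma sheppard_transformation (d : ℕ) (a b c e : ℝ) (hc : poch c d ≠ 0) (he : poch e d ≠ 0) :
    ∑ j ∈ range (d + 1), poch (-(d : ℝ)) j * poch a j * poch b j
        / (poch c j * poch e j * j.factorial)
      = ∑ i ∈ range (d + 1), (d.choose i : ℝ) * poch a i * poch (c - b) i * poch (e - a) (d - i)
          / (poch c i * poch e d) := by
  have hsplit (x : ℝ) {j : ℕ} (hj : j ∈ range (d + 1)) :
      poch x j * poch (x + j) (d - j) = poch x d :=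
    poch_mul_poch_add_sub x (Nat.lt_succ_iff.mp (mem_range.mp hj))
  have hne {x : ℝ} (hx : poch x d ≠ 0) {j : ℕ} (hj : j ∈ range (d + 1)) : poch x j ≠ 0 :=
    left_ne_zero_of_mul (hsplit x hj ▸ hx)
  apply mul_right_cancel₀ (mul_ne_zero hc he)
  rw [sum_mul, sum_mul]
  convert sheppard_transformation_mul d a b c e using 1 <;> refine sum_congr rfl fun j hj => ?_
  · rw [poch_neg_natCast, ← hsplit c hj, ← hsplit e hj]
    field_simp [hne hc hj, hne he hj]
  · rw [← hsplit c hj]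
    field_simp [hne hc hj]

theorem stmt13_general (n k ℓ δ : ℕ) (hδ : δ ≤ k) (hn : 2 * k ≤ n) :
    ∑ j ∈ Finset.range (δ + 1),
        poch (-(ℓ : ℝ)) j * poch (-(δ : ℝ)) j * poch ((ℓ : ℝ) - n - 1) j /
          (poch ((k : ℝ) - n) j * poch (-(k : ℝ)) j * (j.factorial : ℝ))
      = ((δ.factorial : ℝ) / poch ((k : ℝ) - n) δ) *
          ∑ j ∈ Finset.range (δ + 1),
            poch ((ℓ : ℝ) - k) j * poch (-(δ : ℝ)) j * poch ((n : ℝ) - k - ℓ + 1) j /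
              (poch 1 j * poch (-(k : ℝ)) j * (j.factorial : ℝ)) := by
  have hk : poch (-(k : ℝ)) δ ≠ 0 := by
    rw [Ne, poch_eq_zero_iff]
    rintro ⟨t, ht, htk⟩
    rw [neg_neg, Nat.cast_inj] at htk
    omega
  have hkn : poch ((k : ℝ) - n) δ ≠ 0 := by
    rw [Ne, poch_eq_zero_iff]
    rintro ⟨t, ht, htk⟩
    have : t + k = n := by exact_mod_cast (by linarith : (t : ℝ) + k = n)
    omega
  have hone : poch 1 δ ≠ 0 := by rw [poch_one]; positivity
  calc _ = ∑ j ∈ range (δ + 1), poch (-(δ : ℝ)) j * poch ((ℓ : ℝ) - n - 1) j * poch (-(ℓ : ℝ)) j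
          / (poch (-(k : ℝ)) j * poch ((k : ℝ) - n) j * j.factorial) :=
        sum_congr rfl fun _ _ => by ring
    _ = ∑ i ∈ range (δ + 1), (δ.choose i : ℝ) * poch ((ℓ : ℝ) - n - 1) i * poch ((ℓ : ℝ) - k) i
          * poch ((k : ℝ) - ℓ + 1) (δ - i) / (poch (-(k : ℝ)) i * poch ((k : ℝ) - n) δ) := by
        rw [sheppard_transformation _ _ _ _ _ hk hkn, neg_sub_neg,
          show (k : ℝ) - n - (ℓ - n - 1) = k - ℓ + 1 by ring]
    _ = (δ.factorial / poch ((k : ℝ) - n) δ) * ∑ i ∈ range (δ + 1), (δ.choose i : ℝ)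
          * poch ((ℓ : ℝ) - k) i * poch ((ℓ : ℝ) - n - 1) i * poch ((k : ℝ) - ℓ + 1) (δ - i)
          / (poch (-(k : ℝ)) i * poch 1 δ) := by
        rw [mul_sum, poch_one]
        refine sum_congr rfl fun i _ => ?_
        field_simp
    _ = (δ.factorial / poch ((k : ℝ) - n) δ) * ∑ j ∈ range (δ + 1), poch (-(δ : ℝ)) j
          * poch ((ℓ : ℝ) - k) j * poch ((n : ℝ) - k - ℓ + 1) j
          / (poch (-(k : ℝ)) j * poch 1 j * j.factorial) := by
        rw [sheppard_transformation _ _ _ _ _ hk hone,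
          show -(k : ℝ) - (n - k - ℓ + 1) = ℓ - n - 1 by ring,
          show 1 - ((ℓ : ℝ) - k) = k - ℓ + 1 by ring]
    _ = _ := congrArg _ <| sum_congr rfl fun _ _ => by ring

theorem stmt13 (n k ℓ δ : ℕ) (hℓ : ℓ ≤ k) (hδ : δ ≤ k) (hn : 2 * k ≤ n) :
    ∑ j ∈ Finset.range (δ + 1),
        poch (-(ℓ : ℝ)) j * poch (-(δ : ℝ)) j * poch ((ℓ : ℝ) - n - 1) j /
          (poch ((k : ℝ) - n) j * poch (-(k : ℝ)) j * (j.factorial : ℝ))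
      = ((δ.factorial : ℝ) / poch ((k : ℝ) - n) δ) *
          ∑ j ∈ Finset.range (δ + 1),
            poch ((ℓ : ℝ) - k) j * poch (-(δ : ℝ)) j * poch ((n : ℝ) - k - ℓ + 1) j /
              (poch 1 j * poch (-(k : ℝ)) j * (j.factorial : ℝ)) :=
  stmt13_general n k ℓ δ hδ hn
end
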